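/- Let (X, ↪, P) be a primal-proximity space with P = {A ⊆ X : A ≠ X}. Then the operator A ↦ A^↪ := {x ∈ X : {x} ↪ A} is a Kuratowski closure operator: (1) ∅^↪ = ∅; (2) A ⊆ A^↪ for every A ⊆ X; (3) (A ∪ B)^↪ = A^↪ ∪ B^↪ for all A, B ⊆ X; (4) (A^↪)^↪ = A^↪ for every A ⊆ X. -/

import Mathlib

/-!
The properties `A ⊆ A^↪`, `∅^↪ = ∅` and additivity come straight from the axioms. For idempotence,
if `x ∉ A^↪` then axiom (5) yields `C`, `D` with `{x} ̸↪ Cᶜ`, `Dᶜ ̸↪ A` and `C ∩ D = ∅`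
(the only set whose complement is not a proper subset). Every point of `A^↪` lies in `D`, so
`A^↪ ⊆ D ⊆ Cᶜ`, and hence `{x} ̸↪ A^↪`.
-/

open Set

/-- A collection `P` of subsets of `X` is a *primal* on `X`. -/
def IsPrimalOn {X : Type*} (P : Set (Set X)) : Prop :=
  (Set.univ : Set X) ∉ P ∧
  (∀ A B : Set X, A ∈ P → B ⊆ A → B ∈ P) ∧
  (∀ A B : Set X, A ∩ B ∈ P → A ∈ P ∨ B ∈ P)

/-- A binary relation `r` on the power set of `X` is a *primal-proximity* with
respect to a primal `P` on `X`. -/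
def IsPrimalProximity {X : Type*} (P : Set (Set X)) (r : Set X → Set X → Prop) : Prop :=
  (∀ A B : Set X, r A B → r B A) ∧
  (∀ A B C : Set X, r A (B ∪ C) ↔ (r A B ∨ r A C)) ∧
  (∀ A : Set X, Aᶜ ∉ P → ∀ B : Set X, ¬ r A B) ∧
  (∀ A B : Set X, (A ∩ B)ᶜ ∈ P → r A B) ∧
  (∀ A B : Set X, ¬ r A B →
    ∃ C D : Set X, ¬ r A Cᶜ ∧ ¬ r Dᶜ B ∧ (C ∩ D)ᶜ ∉ P)

/-- The point-primal proximity of `A`: `A^↪ = {x | {x} ↪ A}`. -/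
def ppp {X : Type*} (r : Set X → Set X → Prop) (A : Set X) : Set X :=
  {x : X | r {x} A}

namespace IsPrimalProximity

variable {X : Type*} {P : Set (Set X)} {r : Set X → Set X → Prop}

theorem mono_right (hr : IsPrimalProximity P r) {A B B' : Set X} (h : r A B) (hB : B ⊆ B') :
    r A B' := by
  simpa only [union_eq_right.mpr hB] using (hr.2.1 A B B').mpr (Or.inl h)

theorem mono_left (hr : IsPrimalProximity P r) {A A' B : Set X} (h : r A B) (hA : A ⊆ A') :
    r A' B :=
  hr.1 _ _ (hr.mono_right (hr.1 _ _ h) hA)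

theorem ppp_union (hr : IsPrimalProximity P r) (A B : Set X) :
    ppp r (A ∪ B) = ppp r A ∪ ppp r B :=
  ext fun x => hr.2.1 {x} A B

theorem ppp_empty (hP : IsPrimalOn P) (hr : IsPrimalProximity P r) : ppp r (∅ : Set X) = ∅ :=
  eq_empty_of_forall_notMem fun _ hx => hr.2.2.1 ∅ (compl_empty ▸ hP.1) _ (hr.1 _ _ hx)

theorem subset_ppp (hr : IsPrimalProximity P r) (hP : ∀ S : Set X, S.Nonempty → Sᶜ ∈ P)
    (A : Set X) : A ⊆ ppp r A := fun x hx =>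
  hr.2.2.2.1 {x} A (hP _ ⟨x, rfl, hx⟩)

theorem ppp_subset_of_not_rel (hr : IsPrimalProximity P r) {A D : Set X} (h : ¬ r Dᶜ A) :
    ppp r A ⊆ D := fun y hy => by
  by_contra hyD
  exact h (hr.mono_left hy (singleton_subset_iff.mpr hyD))

theorem ppp_ppp (hr : IsPrimalProximity P r) (hP : ∀ S : Set X, S.Nonempty → Sᶜ ∈ P)
    (A : Set X) : ppp r (ppp r A) = ppp r A := by
  refine Subset.antisymm ?_ (hr.subset_ppp hP _)
  intro x hx
  by_contra hxA
  obtain ⟨C, D, hxC, hDA, hCDc⟩ := hr.2.2.2.2 {x} A hxA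
  have hCD : C ∩ D = ∅ := not_nonempty_iff_eq_empty.mp fun hne => hCDc (hP _ hne)
  have hAC : ppp r A ⊆ Cᶜ :=
    (hr.ppp_subset_of_not_rel hDA).trans (subset_compl_iff_disjoint_left.mpr
      (disjoint_iff_inter_eq_empty.mpr hCD))
  exact hxC (hr.mono_right hx hAC)

end IsPrimalProximity

theorem stmt_16_general {X : Type*} (P : Set (Set X)) (r : Set X → Set X → Prop)
    (hP : IsPrimalOn P) (hr : IsPrimalProximity P r)
    (hPuniv : P = {A : Set X | A ≠ Set.univ}) :
    (ppp r (∅ : Set X) = ∅) ∧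
    (∀ A : Set X, A ⊆ ppp r A) ∧
    (∀ A B : Set X, ppp r (A ∪ B) = ppp r A ∪ ppp r B) ∧
    (∀ A : Set X, ppp r (ppp r A) = ppp r A) := by
  have hcompl : ∀ S : Set X, S.Nonempty → Sᶜ ∈ P := fun S hS => by
    rw [hPuniv]
    exact compl_ne_univ.mpr hS
  exact ⟨hr.ppp_empty hP, hr.subset_ppp hcompl, hr.ppp_union, hr.ppp_ppp hcompl⟩

theorem stmt_16 {X : Type*} [Nonempty X] (P : Set (Set X)) (r : Set X → Set X → Prop)
    (hP : IsPrimalOn P) (hr : IsPrimalProximity P r)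
    (hPuniv : P = {A : Set X | A ≠ Set.univ}) :
    (ppp r (∅ : Set X) = ∅) ∧
    (∀ A : Set X, A ⊆ ppp r A) ∧
    (∀ A B : Set X, ppp r (A ∪ B) = ppp r A ∪ ppp r B) ∧
    (∀ A : Set X, ppp r (ppp r A) = ppp r A) :=
  stmt_16_general P r hP hr hPuniv
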